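/- Let Γ be a graph with a distinguished vertex v. The link double of the double satisfies D°_{(v,1)}(D(Γ)) ≅ D(D*_v(Γ)): the link double of the double of Γ at the vertex (v,1) is isomorphic, as a graph, to the double of the star double of Γ at v. -/

import Mathlib

/-- The double of a graph. -/
def GraphDouble {V : Type*} (G : SimpleGraph V) : SimpleGraph (V × Bool) where
  Adj p q := G.Adj p.1 q.1
  symm := ⟨fun _ _ h => G.symm.symm _ _ h⟩
  loopless := ⟨fun p h => G.loopless.irrefl p.1 h⟩

/-- The link double `D°_v(Γ)`: two copies of `Γ` identified along `lk(v)` (represented by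
the copies `(w, false)` for `w ∈ lk(v)`), with both copies of `v` removed. -/
def LinkDouble {V : Type*} (G : SimpleGraph V) (v : V) :
    SimpleGraph {p : V × Bool // p.1 ≠ v ∧ (G.Adj v p.1 → p.2 = false)} where
  Adj p q := G.Adj p.1.1 q.1.1 ∧ (p.1.2 = q.1.2 ∨ G.Adj v p.1.1 ∨ G.Adj v q.1.1)
  symm := by
    constructor
    rintro p q ⟨h1, h2⟩
    refine ⟨G.symm.symm _ _ h1, ?_⟩
    rcases h2 with h | h | h
    · exact Or.inl h.symm
    · exact Or.inr (Or.inr h)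
    · exact Or.inr (Or.inl h)
  loopless := ⟨fun p h => G.loopless.irrefl p.1.1 h.1⟩

/-- The star double `D*_v(Γ)`: two copies of `Γ` identified along `st(v)` (represented by
the copies `(w, false)` for `w ∈ st(v)`). -/
def StarDouble {V : Type*} (G : SimpleGraph V) (v : V) :
    SimpleGraph {p : V × Bool // (G.Adj v p.1 ∨ p.1 = v) → p.2 = false} where
  Adj p q := G.Adj p.1.1 q.1.1 ∧
    (p.1.2 = q.1.2 ∨ (G.Adj v p.1.1 ∨ p.1.1 = v) ∨ (G.Adj v q.1.1 ∨ q.1.1 = v))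
  symm := by
    constructor
    rintro p q ⟨h1, h2⟩
    refine ⟨G.symm.symm _ _ h1, ?_⟩
    rcases h2 with h | h | h
    · exact Or.inl h.symm
    · exact Or.inr (Or.inr h)
    · exact Or.inr (Or.inl h)
  loopless := ⟨fun p h => G.loopless.irrefl p.1.1 h.1⟩


/-!
Write a vertex of `D°_{(v,1)}(D(Γ))` as `((x, b), c)`, with `b` the sheet of `D(Γ)` and `c` the
sheet of the link double, and a vertex of `D(D*_v(Γ))` as `((x, b), c)`, with `b` the sheet of
`D*_v(Γ)` and `c` the sheet of the outer double. Both adjacencies say "`x ~ y` in `Γ`, and the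
relevant sheets agree unless an endpoint lies in `lk(v)` (resp. `st(v)`)". Away from `v` these
conditions coincide, so exchanging the two sheets is an isomorphism there; over `v` only the
sheet `b = 0` survives in the link double, and its free sheet `c` becomes the outer sheet.
-/

section

variable {V : Type*} (G : SimpleGraph V)

@[simp] lemma graphDouble_adj {p q : V × Bool} : (GraphDouble G).Adj p q ↔ G.Adj p.1 q.1 :=
  Iff.rfl

@[simp] lemma linkDouble_adj (v : V) {p q} :
    (LinkDouble G v).Adj p q ↔ G.Adj p.1.1 q.1.1 ∧ (p.1.2 = q.1.2 ∨ G.Adj v p.1.1 ∨ G.Adj v q.1.1) :=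
  Iff.rfl

@[simp] lemma starDouble_adj (v : V) {p q} :
    (StarDouble G v).Adj p q ↔ G.Adj p.1.1 q.1.1 ∧
      (p.1.2 = q.1.2 ∨ (G.Adj v p.1.1 ∨ p.1.1 = v) ∨ (G.Adj v q.1.1 ∨ q.1.1 = v)) :=
  Iff.rfl

end

section

variable {V : Type*} [DecidableEq V] (G : SimpleGraph V) (v : V)

def swapSheetsAwayFrom (p : (V × Bool) × Bool) : (V × Bool) × Bool :=
  if p.1.1 = v then p else ((p.1.1, p.2), p.1.2)

lemma swapSheetsAwayFrom_involutive : Function.Involutive (swapSheetsAwayFrom v) := by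
  rintro ⟨⟨x, b⟩, c⟩
  by_cases hx : x = v <;> simp [swapSheetsAwayFrom, hx]

@[simp] lemma swapSheetsAwayFrom_fst_fst (p : (V × Bool) × Bool) :
    (swapSheetsAwayFrom v p).1.1 = p.1.1 := by
  unfold swapSheetsAwayFrom
  split_ifs <;> rfl

lemma linkDouble_graphDouble_vertex_iff (p : (V × Bool) × Bool) :
    (p.1 ≠ (v, true) ∧ ((GraphDouble G).Adj (v, true) p.1 → p.2 = false)) ↔
      ((G.Adj v (swapSheetsAwayFrom v p).1.1 ∨ (swapSheetsAwayFrom v p).1.1 = v) →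
        (swapSheetsAwayFrom v p).1.2 = false) := by
  obtain ⟨⟨x, b⟩, c⟩ := p
  by_cases hx : x = v
  · subst hx
    simp [swapSheetsAwayFrom]
  · simp [swapSheetsAwayFrom, hx]

def linkDoubleGraphDoubleEquiv :
    {p : (V × Bool) × Bool // p.1 ≠ (v, true) ∧ ((GraphDouble G).Adj (v, true) p.1 → p.2 = false)} ≃
      {q : V × Bool // (G.Adj v q.1 ∨ q.1 = v) → q.2 = false} × Bool :=
  ((swapSheetsAwayFrom_involutive v).toPerm.subtypeEquiv
    (linkDouble_graphDouble_vertex_iff G v)).trans Equiv.prodSubtypeFstEquivSubtypeProd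

lemma coe_linkDoubleGraphDoubleEquiv_fst (p) :
    ((linkDoubleGraphDoubleEquiv G v p).1 : V × Bool) = (swapSheetsAwayFrom v p).1 :=
  rfl

lemma linkDoubleGraphDoubleEquiv_adj_iff (p q) :
    (GraphDouble (StarDouble G v)).Adj (linkDoubleGraphDoubleEquiv G v p)
        (linkDoubleGraphDoubleEquiv G v q) ↔
      (LinkDouble (GraphDouble G) (v, true)).Adj p q := by
  obtain ⟨⟨⟨x, b⟩, c⟩, -⟩ := p
  obtain ⟨⟨⟨y, b'⟩, c'⟩, -⟩ := q
  simp only [graphDouble_adj, starDouble_adj, linkDouble_adj, coe_linkDoubleGraphDoubleEquiv_fst,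
    swapSheetsAwayFrom_fst_fst]
  refine and_congr_right fun hxy => ?_
  by_cases hxv : x = v
  · subst hxv
    simp [swapSheetsAwayFrom, hxy]
  by_cases hyv : y = v
  · subst hyv
    simp [swapSheetsAwayFrom, hxy.symm]
  simp [swapSheetsAwayFrom, hxv, hyv]

end

/-- `D°_{(v,1)}(D(Γ)) ≅ D(D*_v(Γ))`: the link double of the double of `Γ` at the vertex
`(v,1)` is isomorphic to the double of the star double of `Γ` at `v`. -/
theorem stmt9 {V : Type*} (G : SimpleGraph V) (v : V) :
    Nonempty (LinkDouble (GraphDouble G) (v, true) ≃g GraphDouble (StarDouble G v)) := by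
  classical
  exact ⟨⟨linkDoubleGraphDoubleEquiv G v, linkDoubleGraphDoubleEquiv_adj_iff G v _ _⟩⟩
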